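/- Let p and q be odd integers with 5 ≤ p ≤ q, and let H⁻(p,q) be the presented group on generators a,b,α,β with relators α^{-1}a^{(p-1)/2}, β^{-1}b^{(q-1)/2}, aβb^{-1}aβ(αbαβ)^2, and αba^{-1}αb(αβaβ)^2. Then there is a surjective group homomorphism from H⁻(p,q) onto Coxeter's group G^{5,p,q} sending α to A, β to B^{-1}, a to A^{-2}, and b to B^2. -/

import Mathlib

/-!
In `G^{5,p,q}` the relations `(AB)² = (BC)² = (CA)² = (ABC)² = 1` give `A²B² = C⁻²`, and `C⁵ = 1`
turns this into `C = (A²B²)²`; so `A` and `B` generate, and `C` can be eliminated. The relator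
`α⁻¹a^((p-1)/2)` maps to `A^(-p)`, and `β⁻¹b^((q-1)/2)` to `B^q`, because `p` and `q` are odd.
The other two relators reduce to the identity by `x y² x = (y x² y)⁻¹`, a consequence of
`(xy)² = 1`, together with the conjugation relations `B C B = C⁻¹` and `A C A = C⁻¹` read with
`C = (A²B²)²`.
-/

/-- The relators of the group `H⁻(p,q)` on generators
`a = of 0`, `b = of 1`, `α = of 2`, `β = of 3`. -/
def HminusRels (p q : ℤ) : Set (FreeGroup (Fin 4)) :=
  let a : FreeGroup (Fin 4) := FreeGroup.of 0
  let b : FreeGroup (Fin 4) := FreeGroup.of 1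
  let al : FreeGroup (Fin 4) := FreeGroup.of 2
  let be : FreeGroup (Fin 4) := FreeGroup.of 3
  { al⁻¹ * a ^ ((p - 1) / 2), be⁻¹ * b ^ ((q - 1) / 2),
    a * be * b⁻¹ * a * be * (al * b * al * be) ^ 2,
    al * b * a⁻¹ * al * b * (al * be * a * be) ^ 2 }

/-- The relators of Coxeter's group `G^{m,p,q}` on generators
`A = of 0`, `B = of 1`, `C = of 2`. -/
def coxeterGRels (m p q : ℤ) : Set (FreeGroup (Fin 3)) :=
  let A : FreeGroup (Fin 3) := FreeGroup.of 0
  let B : FreeGroup (Fin 3) := FreeGroup.of 1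
  let C : FreeGroup (Fin 3) := FreeGroup.of 2
  { A ^ p, B ^ q, C ^ m, (A * B) ^ 2, (B * C) ^ 2, (C * A) ^ 2, (A * B * C) ^ 2 }


section CoxeterRelations

variable {G : Type*} [Group G]

theorem inv_eq_self_of_sq_eq_one {x : G} (h : x ^ 2 = 1) : x⁻¹ = x :=
  inv_eq_of_mul_eq_one_right (by rwa [← sq])

theorem mul_eq_inv_mul_inv_of_sq_eq_one {x y : G} (h : (x * y) ^ 2 = 1) : x * y = y⁻¹ * x⁻¹ := by
  rw [← mul_inv_rev, inv_eq_self_of_sq_eq_one h]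

theorem mul_mul_eq_inv_of_sq_eq_one {x y : G} (h : (x * y) ^ 2 = 1) : x * y * x = y⁻¹ := by
  rw [mul_eq_inv_mul_inv_of_sq_eq_one h]; simp

theorem mul_mul_eq_inv_of_sq_eq_one' {x y : G} (h : (x * y) ^ 2 = 1) : y * x * y = x⁻¹ := by
  rw [mul_assoc, mul_eq_inv_mul_inv_of_sq_eq_one h]; simp

theorem mul_sq_mul_eq_inv_of_sq_eq_one {x y : G} (h : (x * y) ^ 2 = 1) :
    x * y ^ 2 * x = (y * x ^ 2 * y)⁻¹ := by
  rw [eq_inv_iff_mul_eq_one]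
  calc x * y ^ 2 * x * (y * x ^ 2 * y) = x * y * (y * x * y) * x ^ 2 * y := by simp [sq, mul_assoc]
    _ = (x * y) ^ 2 := by rw [mul_mul_eq_inv_of_sq_eq_one' h]; simp [sq, mul_assoc]
    _ = 1 := h

structure IsCoxeterGTriple (m p q : ℤ) (A B C : G) : Prop where
  zpow_left : A ^ p = 1
  zpow_middle : B ^ q = 1
  zpow_right : C ^ m = 1
  sq_left_middle : (A * B) ^ 2 = 1
  sq_middle_right : (B * C) ^ 2 = 1
  sq_right_left : (C * A) ^ 2 = 1
  sq_all : (A * B * C) ^ 2 = 1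

variable {A B C : G}

theorem sq_mul_sq_eq_inv_sq (hAB : (A * B) ^ 2 = 1) (hBC : (B * C) ^ 2 = 1)
    (hCA : (C * A) ^ 2 = 1) (hABC : (A * B * C) ^ 2 = 1) : A ^ 2 * B ^ 2 = (C ^ 2)⁻¹ :=
  calc A ^ 2 * B ^ 2 = C⁻¹ * (C * A) * (A * B) * B := by simp [sq, mul_assoc]
    _ = C⁻¹ * A⁻¹ * (C⁻¹ * B⁻¹ * A⁻¹) * B := by
      rw [mul_eq_inv_mul_inv_of_sq_eq_one hCA, mul_eq_inv_mul_inv_of_sq_eq_one hAB]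
      simp [mul_assoc]
    _ = C⁻¹ * A⁻¹ * (A * B * C)⁻¹ * B := by simp [mul_assoc]
    _ = C⁻¹ * (B * C * B) := by rw [inv_eq_self_of_sq_eq_one hABC]; simp [mul_assoc]
    _ = (C ^ 2)⁻¹ := by rw [mul_mul_eq_inv_of_sq_eq_one hBC]; simp [sq]

theorem IsCoxeterGTriple.sq_mul_sq_sq_eq {p q : ℤ} (h : IsCoxeterGTriple 5 p q A B C) :
    (A ^ 2 * B ^ 2) ^ 2 = C := by
  rw [sq_mul_sq_eq_inv_sq h.sq_left_middle h.sq_middle_right h.sq_right_left h.sq_all]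
  calc ((C ^ 2)⁻¹) ^ 2 = (C ^ (5 : ℤ))⁻¹ * C := by group
    _ = C := by rw [h.zpow_right, inv_one, one_mul]

theorem hminus_relator_three_eq_one (hAB : (A * B) ^ 2 = 1) (hBC : (B * C) ^ 2 = 1)
    (hC : (A ^ 2 * B ^ 2) ^ 2 = C) :
    A ^ (-2 : ℤ) * B⁻¹ * (B ^ 2)⁻¹ * A ^ (-2 : ℤ) * B⁻¹ * (A * B ^ 2 * A * B⁻¹) ^ 2 = 1 := by
  have hBCB : B * (A ^ 2 * B ^ 2) ^ 2 * B = ((A ^ 2 * B ^ 2) ^ 2)⁻¹ := by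
    rw [hC]; exact mul_mul_eq_inv_of_sq_eq_one hBC
  calc _ = A ^ (-2 : ℤ) * B⁻¹ * (B ^ 2)⁻¹ * A ^ (-2 : ℤ) * B⁻¹ * ((B * A ^ 2 * B)⁻¹ * B⁻¹) ^ 2 := by
        rw [mul_sq_mul_eq_inv_of_sq_eq_one hAB]
    _ = A ^ (-2 : ℤ) * (B * (A ^ 2 * B ^ 2) ^ 2 * B)⁻¹ * (A ^ 2 * B ^ 2)⁻¹ * B ^ (-2 : ℤ) := by
        simp [sq, mul_assoc]
    _ = 1 := by rw [hBCB]; simp [sq, mul_assoc]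

theorem hminus_relator_four_eq_one (hAB : (A * B) ^ 2 = 1) (hCA : (C * A) ^ 2 = 1)
    (hC : (A ^ 2 * B ^ 2) ^ 2 = C) :
    A * B ^ 2 * (A ^ (-2 : ℤ))⁻¹ * A * B ^ 2 * (A * B⁻¹ * A ^ (-2 : ℤ) * B⁻¹) ^ 2 = 1 := by
  have hACA : A * (A ^ 2 * B ^ 2) ^ 2 * A = ((A ^ 2 * B ^ 2) ^ 2)⁻¹ := by
    rw [hC]; exact mul_mul_eq_inv_of_sq_eq_one' hCA
  calc _ = A * B ^ 2 * (A ^ (-2 : ℤ))⁻¹ * A * B ^ 2 * (A * (B * A ^ 2 * B)⁻¹) ^ 2 := by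
        simp [mul_assoc]
    _ = A * B ^ 2 * (A ^ (-2 : ℤ))⁻¹ * A * B ^ 2 * (A * (A * B ^ 2 * A)) ^ 2 := by
        rw [← mul_sq_mul_eq_inv_of_sq_eq_one hAB]
    _ = A⁻¹ * (A ^ 2 * B ^ 2) * (A * (A ^ 2 * B ^ 2) ^ 2 * A) * (A ^ 2 * B ^ 2) * A := by
        simp [sq, mul_assoc]
    _ = 1 := by rw [hACA]; simp [sq, mul_assoc]

theorem IsCoxeterGTriple.hminusRels_lift_eq_one {p q : ℤ} (hp : Odd p) (hq : Odd q)
    (h : IsCoxeterGTriple 5 p q A B C) :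
    ∀ r ∈ HminusRels p q, FreeGroup.lift ![A ^ (-2 : ℤ), B ^ 2, A, B⁻¹] r = 1 := by
  simp only [HminusRels, Set.mem_insert_iff, Set.mem_singleton_iff]
  rintro r (rfl | rfl | rfl | rfl) <;>
    simp only [map_mul, map_inv, map_pow, map_zpow, FreeGroup.lift_apply_of, Matrix.cons_val_zero,
      Matrix.cons_val_one, Matrix.cons_val_two, Matrix.cons_val_three, Matrix.head_cons,
      Matrix.tail_cons]
  · obtain ⟨k, rfl⟩ := hp
    rw [show (2 * k + 1 - 1) / 2 = k by omega, ← inv_one, ← h.zpow_left]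
    group
  · obtain ⟨k, rfl⟩ := hq
    rw [show (2 * k + 1 - 1) / 2 = k by omega, ← h.zpow_middle]
    group
  · exact hminus_relator_three_eq_one h.sq_left_middle h.sq_middle_right h.sq_mul_sq_sq_eq
  · exact hminus_relator_four_eq_one h.sq_left_middle h.sq_right_left h.sq_mul_sq_sq_eq

end CoxeterRelations

theorem isCoxeterGTriple_of (m p q : ℤ) :
    IsCoxeterGTriple m p q (.of 0 : PresentedGroup (coxeterGRels m p q)) (.of 1) (.of 2) where
  zpow_left := PresentedGroup.one_of_mem (x := .of 0 ^ p) (by simp [coxeterGRels])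
  zpow_middle := PresentedGroup.one_of_mem (x := .of 1 ^ q) (by simp [coxeterGRels])
  zpow_right := PresentedGroup.one_of_mem (x := .of 2 ^ m) (by simp [coxeterGRels])
  sq_left_middle := PresentedGroup.one_of_mem (x := (.of 0 * .of 1) ^ 2) (by simp [coxeterGRels])
  sq_middle_right := PresentedGroup.one_of_mem (x := (.of 1 * .of 2) ^ 2) (by simp [coxeterGRels])
  sq_right_left := PresentedGroup.one_of_mem (x := (.of 2 * .of 0) ^ 2) (by simp [coxeterGRels])
  sq_all := PresentedGroup.one_of_mem (x := (.of 0 * .of 1 * .of 2) ^ 2) (by simp [coxeterGRels])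

theorem Hminus_surjects_onto_G5pq_general (p q : ℤ) (hp : Odd p) (hq : Odd q) :
    ∃ f : PresentedGroup (HminusRels p q) →* PresentedGroup (coxeterGRels 5 p q),
      Function.Surjective f ∧
      f (PresentedGroup.of 2) = PresentedGroup.of 0 ∧
      f (PresentedGroup.of 3) = (PresentedGroup.of 1)⁻¹ ∧
      f (PresentedGroup.of 0) = (PresentedGroup.of 0) ^ (-2 : ℤ) ∧
      f (PresentedGroup.of 1) = (PresentedGroup.of 1) ^ 2 := by
  have hG := isCoxeterGTriple_of 5 p q
  set f := PresentedGroup.toGroup (hG.hminusRels_lift_eq_one hp hq)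
  have hf (i : Fin 4) : f (.of i) = ![_, _, _, _] i := PresentedGroup.toGroup.of _
  refine ⟨f, fun x => PresentedGroup.generated_by _ f.range ?_ x, hf 2, hf 3, hf 0, hf 1⟩
  intro j
  fin_cases j
  · exact ⟨.of 2, hf 2⟩
  · exact ⟨(.of 3)⁻¹, by simp [hf 3]⟩
  · exact ⟨(.of 2 ^ 2 * (.of 3)⁻¹ ^ 2) ^ 2, by simpa [hf] using hG.sq_mul_sq_sq_eq⟩

/-- For `p,q` odd with `5 ≤ p ≤ q`, `H⁻(p,q)` surjects onto Coxeter's group `G^{5,p,q}`,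
sending `α ↦ A`, `β ↦ B⁻¹`, `a ↦ A⁻²`, `b ↦ B²`. -/
theorem Hminus_surjects_onto_G5pq (p q : ℤ) (hp : Odd p) (hq : Odd q)
    (hp5 : 5 ≤ p) (hpq : p ≤ q) :
    ∃ f : PresentedGroup (HminusRels p q) →* PresentedGroup (coxeterGRels 5 p q),
      Function.Surjective f ∧
      f (PresentedGroup.of 2) = PresentedGroup.of 0 ∧
      f (PresentedGroup.of 3) = (PresentedGroup.of 1)⁻¹ ∧
      f (PresentedGroup.of 0) = (PresentedGroup.of 0) ^ (-2 : ℤ) ∧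
      f (PresentedGroup.of 1) = (PresentedGroup.of 1) ^ 2 :=
  Hminus_surjects_onto_G5pq_general p q hp hq
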